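/- Let N ≥ 2, τ > 0, and s, ŝ : Fin N × Fin N → ℝ with s(i,i) = ŝ(i,i) for all i and ŝ(i,j) ≤ s(i,j) for all i ≠ j. Suppose there exist constants p₁, p₂ ∈ ℝ such that s(i,i) ≥ p₁ for all i and s(i,j) ≤ p₂ for all i ≠ j. Define L = (1/N)·∑_i log( exp(s(i,i)/τ) / ∑_j exp(s(i,j)/τ) ) and L^s similarly with ŝ. Then L^s − L ≤ (N−1)·exp((p₂ − p₁)/τ). -/

import Mathlib

/-! Row by row, with partition functions `A = ∑ⱼ exp (s i j / τ)` and `B = ∑ⱼ exp (ŝ i j / τ)`,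
the loss gap is `log A - log B ≤ (A - B) / B`. The diagonal terms of `A` and `B` agree, so
`A - B` is at most the off-diagonal part of `A`, itself at most `(N - 1) exp (p₂ / τ)`, while
`B ≥ exp (ŝ i i / τ) ≥ exp (p₁ / τ)`. -/

open Real Finset

lemma Real.log_exp_div {b : ℝ} (a : ℝ) (hb : b ≠ 0) : log (exp a / b) = a - log b := by
  rw [log_div (exp_ne_zero a) hb, log_exp]

lemma Real.log_sub_log_le_sub_div {a b : ℝ} (ha : 0 < a) (hb : 0 < b) :
    log a - log b ≤ (a - b) / b := by
  rw [← log_div ha.ne' hb.ne', sub_div, div_self hb.ne']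
  exact log_le_sub_one_of_pos (div_pos ha hb)

section SumExp

variable {ι : Type*} [Fintype ι] (x y : ι → ℝ)

lemma exp_le_sum_exp (i : ι) : exp (x i) ≤ ∑ j, exp (x j) :=
  single_le_sum (fun j _ => (exp_pos (x j)).le) (mem_univ i)

lemma sum_exp_pos [Nonempty ι] : 0 < ∑ j, exp (x j) :=
  sum_pos (fun j _ => exp_pos (x j)) univ_nonempty

/-- Only the off-diagonal terms of `x` survive, since `exp ∘ y ≥ 0`. -/
lemma sum_exp_sub_sum_exp_le {i : ι} {p : ℝ} (hdiag : y i = x i) (hp : ∀ j, j ≠ i → x j ≤ p) :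
    ∑ j, exp (x j) - ∑ j, exp (y j) ≤ ((Fintype.card ι : ℝ) - 1) * exp p := by
  classical
  have hoff : ∑ j ∈ univ.erase i, exp (x j) ≤ ((Fintype.card ι : ℝ) - 1) * exp p := by
    rw [← card_univ, ← cast_card_erase_of_mem (mem_univ i), ← nsmul_eq_mul]
    exact sum_le_card_nsmul _ _ _ fun j hj => exp_le_exp.2 (hp j (ne_of_mem_erase hj))
  have hy : 0 ≤ ∑ j ∈ univ.erase i, exp (y j) := sum_nonneg fun j _ => (exp_pos (y j)).le
  rw [← sum_erase_add _ _ (mem_univ i), ← sum_erase_add _ _ (mem_univ i), hdiag]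
  linarith

lemma log_softmax_sub_log_softmax_le {i : ι} {p₁ p₂ : ℝ} (hdiag : y i = x i) (hp₁ : p₁ ≤ x i)
    (hp₂ : ∀ j, j ≠ i → x j ≤ p₂) :
    log (exp (y i) / ∑ j, exp (y j)) - log (exp (x i) / ∑ j, exp (x j)) ≤
      ((Fintype.card ι : ℝ) - 1) * exp (p₂ - p₁) := by
  have : Nonempty ι := ⟨i⟩
  have hA := sum_exp_pos x
  have hB := sum_exp_pos y
  have hBlo : exp p₁ ≤ ∑ j, exp (y j) :=
    (exp_le_exp.2 (hdiag ▸ hp₁)).trans (exp_le_sum_exp y i)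
  have hcard : (0 : ℝ) ≤ (Fintype.card ι : ℝ) - 1 := by
    simpa using (Nat.one_le_cast (α := ℝ)).2 Fintype.card_pos
  calc log (exp (y i) / ∑ j, exp (y j)) - log (exp (x i) / ∑ j, exp (x j))
      = log (∑ j, exp (x j)) - log (∑ j, exp (y j)) := by
        rw [log_exp_div _ hA.ne', log_exp_div _ hB.ne', hdiag]; ring
    _ ≤ (∑ j, exp (x j) - ∑ j, exp (y j)) / ∑ j, exp (y j) := log_sub_log_le_sub_div hA hB
    _ ≤ ((Fintype.card ι : ℝ) - 1) * exp p₂ / exp p₁ :=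
        div_le_div₀ (by positivity) (sum_exp_sub_sum_exp_le x y hdiag hp₂) (exp_pos p₁) hBlo
    _ = ((Fintype.card ι : ℝ) - 1) * exp (p₂ - p₁) := by rw [exp_sub, mul_div_assoc]

end SumExp

lemma mean_sub_mean_le_of_forall_sub_le {N : ℕ} (hN : N ≠ 0) {f g : Fin N → ℝ} {C : ℝ}
    (h : ∀ i, f i - g i ≤ C) :
    (1 / (N : ℝ)) * ∑ i, f i - (1 / (N : ℝ)) * ∑ i, g i ≤ C := by
  have hsum : ∑ i, (f i - g i) ≤ N * C := by
    simpa using sum_le_card_nsmul univ _ C fun i _ => h i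
  rw [← mul_sub, ← sum_sub_distrib, one_div_mul_eq_div, div_le_iff₀ (by positivity), mul_comm]
  exact hsum

theorem stmt3_general (N : ℕ) (hN : 2 ≤ N) (τ : ℝ) (hτ : 0 < τ)
    (s shat : Fin N → Fin N → ℝ)
    (hdiag : ∀ i, s i i = shat i i)
    (p₁ p₂ : ℝ)
    (hp₁ : ∀ i, p₁ ≤ s i i)
    (hp₂ : ∀ i j, i ≠ j → s i j ≤ p₂) :
    ((1 / (N : ℝ)) * ∑ i : Fin N,
        Real.log (Real.exp (shat i i / τ) / ∑ j : Fin N, Real.exp (shat i j / τ))) -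
      ((1 / (N : ℝ)) * ∑ i : Fin N,
        Real.log (Real.exp (s i i / τ) / ∑ j : Fin N, Real.exp (s i j / τ))) ≤
      ((N : ℝ) - 1) * Real.exp ((p₂ - p₁) / τ) := by
  refine mean_sub_mean_le_of_forall_sub_le (by omega) fun i => ?_
  have hrow := log_softmax_sub_log_softmax_le (fun j => s i j / τ) (fun j => shat i j / τ)
    (p₁ := p₁ / τ) (p₂ := p₂ / τ) (by simp only [hdiag])
    (div_le_div_of_nonneg_right (hp₁ i) hτ.le)
    (fun j hj => div_le_div_of_nonneg_right (hp₂ i j hj.symm) hτ.le)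
  rwa [Fintype.card_fin, ← sub_div] at hrow

theorem stmt3 (N : ℕ) (hN : 2 ≤ N) (τ : ℝ) (hτ : 0 < τ)
    (s shat : Fin N → Fin N → ℝ)
    (hdiag : ∀ i, s i i = shat i i)
    (hle : ∀ i j, i ≠ j → shat i j ≤ s i j)
    (p₁ p₂ : ℝ)
    (hp₁ : ∀ i, p₁ ≤ s i i)
    (hp₂ : ∀ i j, i ≠ j → s i j ≤ p₂) :
    ((1 / (N : ℝ)) * ∑ i : Fin N,
        Real.log (Real.exp (shat i i / τ) / ∑ j : Fin N, Real.exp (shat i j / τ))) -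
      ((1 / (N : ℝ)) * ∑ i : Fin N,
        Real.log (Real.exp (s i i / τ) / ∑ j : Fin N, Real.exp (s i j / τ))) ≤
      ((N : ℝ) - 1) * Real.exp ((p₂ - p₁) / τ) :=
  stmt3_general N hN τ hτ s shat hdiag p₁ p₂ hp₁ hp₂
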